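/- SBLP-to-CBLP probability recovery: fix a customer with \lambda > 0, weights w_0, w_1, ..., w_m > 0 and sales quantities y_0, y_1, ..., y_m \ge 0 with y_j/w_j \le y_0/w_0 for all j \ge 1 and \sum_{j=0}^m y_j = \lambda. Relabel products so that y_1/w_1 \ge y_2/w_2 \ge ... \ge y_m/w_m, and let S_\ell = {0, 1, ..., \ell}. Define \alpha(S_\ell) = ((y_\ell/w_\ell) - (y_{\ell+1}/w_{\ell+1})) (\sum_{j \in S_\ell} w_j)/\lambda for \ell < m and \alpha(S_m) = (y_m/w_m)(\sum_{j \in S_m} w_j)/\lambda. Then all \alpha(S_\ell) \ge 0 and for each product k \ge 1, \sum_{\ell \ge k} \alpha(S_\ell) \cdot \lambda \cdot w_k / (\sum_{j \in S_\ell} w_j) = y_k; i.e., the mixture over nested assortments reproduces the sales quantities via MNL choice probabilities. -/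

import Mathlib

open Finset

lemma telescope_aux (f : ℕ → ℝ) : ∀ a b : ℕ, a ≤ b →
    ∑ ℓ ∈ Finset.Icc a b, (f ℓ - f (ℓ + 1)) = f a - f (b + 1) := by
  intro a b hab
  induction b with
  | zero =>
    interval_cases a
    simp
  | succ n ih =>
    rcases Nat.lt_or_ge a (n + 1) with h | h
    · rw [← Finset.insert_Icc_right_eq_Icc_add_one (by omega), Finset.sum_insert (by simp), ih (by omega)]
      ring
    · have : a = n + 1 := by omega
      subst this
      simp

/-- SBLP-to-CBLP probability recovery. With sales quantities `y` and
weights `w` satisfying the SBLP constraints for one customer, products relabeled so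
that `y j / w j` is nonincreasing on `1..m`, the mixture weights
`α(S_ℓ) = (y_ℓ/w_ℓ - y_{ℓ+1}/w_{ℓ+1}) (∑_{j∈S_ℓ} w j)/λ` (with `y_{m+1}/w_{m+1} := 0`)
are nonnegative, and for every product `k ≥ 1` the induced expected sales via MNL
probabilities reproduce `y k`:
`∑_{ℓ=k}^m α(S_ℓ) · λ · w k / (∑_{j∈S_ℓ} w j) = y k`. -/
theorem stmt_11 (m : ℕ) (hm : 1 ≤ m) (lam : ℝ) (hlam : 0 < lam)
    (w y : ℕ → ℝ)
    (hw : ∀ j, j ≤ m → 0 < w j)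
    (hy : ∀ j, j ≤ m → 0 ≤ y j)
    (hratio : ∀ j, 1 ≤ j → j ≤ m → y j / w j ≤ y 0 / w 0)
    (hsum : ∑ j ∈ range (m + 1), y j = lam)
    (hsorted : ∀ j k, 1 ≤ j → j ≤ k → k ≤ m → y k / w k ≤ y j / w j) :
    letI t : ℕ → ℝ := fun ℓ => if ℓ ≤ m then y ℓ / w ℓ else 0
    letI W : ℕ → ℝ := fun ℓ => ∑ j ∈ range (ℓ + 1), w j
    letI α : ℕ → ℝ := fun ℓ => (t ℓ - t (ℓ + 1)) * W ℓ / lam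
    (∀ ℓ, ℓ ≤ m → 0 ≤ α ℓ) ∧
    (∀ k, 1 ≤ k → k ≤ m →
      ∑ ℓ ∈ Finset.Icc k m, α ℓ * lam * w k / W ℓ = y k) := by
  set t : ℕ → ℝ := fun ℓ => if ℓ ≤ m then y ℓ / w ℓ else 0 with htdef
  set W : ℕ → ℝ := fun ℓ => ∑ j ∈ range (ℓ + 1), w j with hWdef
  set α : ℕ → ℝ := fun ℓ => (t ℓ - t (ℓ + 1)) * W ℓ / lam with hαdef
  have hWpos : ∀ ℓ, ℓ ≤ m → 0 < W ℓ := by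
    intro ℓ hℓ
    simp only [hWdef]
    apply Finset.sum_pos
    · intro j hj
      exact hw j (by simp at hj; omega)
    · exact ⟨0, by simp⟩
  have hstep : ∀ ℓ, ℓ ≤ m → t (ℓ + 1) ≤ t ℓ := by
    intro ℓ hℓ
    simp only [htdef, if_pos hℓ]
    rcases Nat.lt_or_ge ℓ m with h | h
    · rw [if_pos (by omega)]
      rcases Nat.eq_zero_or_pos ℓ with h0 | h1
      · subst h0; exact hratio 1 le_rfl (by omega)
      · exact hsorted ℓ (ℓ + 1) h1 (by omega) (by omega)
    · have : ¬ (ℓ + 1 ≤ m) := by omega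
      rw [if_neg this]
      exact div_nonneg (hy ℓ hℓ) (hw ℓ hℓ).le
  constructor
  · intro ℓ hℓ
    apply div_nonneg _ hlam.le
    exact mul_nonneg (by linarith [hstep ℓ hℓ]) (hWpos ℓ hℓ).le
  · intro k hk hkm
    have : ∀ ℓ ∈ Finset.Icc k m, α ℓ * lam * w k / W ℓ = (t ℓ - t (ℓ + 1)) * w k := by
      intro ℓ hℓ
      simp only [Finset.mem_Icc] at hℓ
      have hW := hWpos ℓ hℓ.2
      simp only [hαdef]
      field_simp
    rw [Finset.sum_congr rfl this, ← Finset.sum_mul, telescope_aux _ k m hkm]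
    simp only [htdef, if_pos hkm, if_neg (by omega : ¬ (m + 1 ≤ m)), sub_zero]
    field_simp [(hw k hkm).ne']
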